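/- arXiv:0803.2587 — 5 statements merged into one kernel-verified Lean document; each statement's English description precedes it below -/
import Mathlib

section
/- Let C be a category and W a class of morphisms satisfying (L0), (L1), and (L2'), and let W_L denote the class of morphisms of C generated under composition by W together with all split monomorphisms of C. Then for every morphism w' in W_L there exists a morphism k in C such that k ∘ w' belongs to W. -/
open CategoryTheory

universe v u

variable {C : Type u} [Category.{v} C]

/-- Axiom (L0): `W` contains all identities and is closed under composition. -/
def AxL0 (W : MorphismProperty C) : Prop :=
  (∀ X : C, W (𝟙 X)) ∧
    ∀ ⦃X Y Z : C⦄ (f : X ⟶ Y) (g : Y ⟶ Z), W f → W g → W (f ≫ g)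

/-- Axiom (L1): every `w : A ⟶ B` in `W` and `f : A ⟶ D` can be completed to a
commutative square `f ≫ w' = w ≫ f'` (i.e. `w' ∘ f = f' ∘ w`) with `w' ∈ W`. -/
def AxL1 (W : MorphismProperty C) : Prop :=
  ∀ ⦃A B D : C⦄ (w : A ⟶ B) (f : A ⟶ D), W w →
    ∃ (E : C) (w' : D ⟶ E) (f' : B ⟶ E), W w' ∧ f ≫ w' = w ≫ f'

/-- Axiom (L2): morphisms equalized by a `w ∈ W` on the left are coequalized by some
`w' ∈ W` on the right. -/
def AxL2 (W : MorphismProperty C) : Prop :=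
  ∀ ⦃A B D : C⦄ (w : A ⟶ B) (f₁ f₂ : B ⟶ D), W w → w ≫ f₁ = w ≫ f₂ →
    ∃ (E : C) (w' : D ⟶ E), W w' ∧ f₁ ≫ w' = f₂ ≫ w'

/-- `W_L`: the class of morphisms of `C` generated under composition by `W` together with
all split monomorphisms (morphisms admitting a left inverse). -/
inductive WL (W : MorphismProperty C) : ∀ ⦃X Y : C⦄, (X ⟶ Y) → Prop
  | of {X Y : C} (f : X ⟶ Y) : W f → WL W f
  | splitMono {X Y : C} (f : X ⟶ Y) (r : Y ⟶ X) : f ≫ r = 𝟙 X → WL W f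
  | comp {X Y Z : C} (f : X ⟶ Y) (g : Y ⟶ Z) : WL W f → WL W g → WL W (f ≫ g)

/-- Axiom (L2'): like (L2) but the coequalizing morphism `w'` is only required to lie in
`W_L`. -/
def AxL2' (W : MorphismProperty C) : Prop :=
  ∀ ⦃A B D : C⦄ (w : A ⟶ B) (f₁ f₂ : B ⟶ D), W w → w ≫ f₁ = w ≫ f₂ →
    ∃ (E : C) (w' : D ⟶ E), WL W w' ∧ f₁ ≫ w' = f₂ ≫ w'

/-- Let `C` be a category and `W` a class of morphisms satisfying (L0),
(L1) and (L2'). Then for every morphism `w'` in `W_L` there is a morphism `k` of `C` such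
that `k ∘ w'` belongs to `W`. -/
theorem exists_comp_mem_of_WL (W : MorphismProperty C)
    (hL0 : AxL0 W) (hL1 : AxL1 W) (hL2' : AxL2' W)
    {X Y : C} (w' : X ⟶ Y) (hw' : WL W w') :
    ∃ (Z : C) (k : Y ⟶ Z), W (w' ≫ k) := by
  induction hw' with
  | of f h => exact ⟨_, 𝟙 _, by simpa using h⟩
  | splitMono f r hr => exact ⟨_, r, by rw [hr]; exact hL0.1 _⟩
  | comp f g hf hg ihf ihg =>
    obtain ⟨F, kf, hkf⟩ := ihf
    obtain ⟨E, kg, hkg⟩ := ihg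
    obtain ⟨G, s, t, hs, heq⟩ := hL1 (g ≫ kg) kf hkg
    refine ⟨G, kg ≫ t, ?_⟩
    have : (f ≫ g) ≫ kg ≫ t = (f ≫ kf) ≫ s := by
      simp only [Category.assoc] at heq ⊢
      rw [← heq]
    rw [this]
    exact hL0.2 _ _ hkf hs
end

section
/- Let C be a category and W a class of morphisms satisfying (L0) and (L1). Then axiom (L2) holds for W if and only if axiom (L2') holds for W. -/
open CategoryTheory

universe v u

variable {C : Type u} [Category.{v} C]

/-- Any morphism in `W_L` extends by postcomposition to a morphism in `W`. -/
theorem WL.exists_comp_mem (W : MorphismProperty C) (hL0 : AxL0 W) (hL1 : AxL1 W)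
    {X Y : C} {u : X ⟶ Y} (h : WL W u) : ∃ (Z : C) (t : Y ⟶ Z), W (u ≫ t) := by
  induction h with
  | of f hf => exact ⟨_, 𝟙 _, by simpa using hf⟩
  | splitMono f r hr => exact ⟨_, r, by rw [hr]; exact hL0.1 _⟩
  | comp f g _ _ ihf ihg =>
    obtain ⟨A, tf, htf⟩ := ihf
    obtain ⟨B, tg, htg⟩ := ihg
    obtain ⟨E, w', f', hw', hsq⟩ := hL1 (g ≫ tg) tf htg
    refine ⟨E, tg ≫ f', ?_⟩
    have : (f ≫ g) ≫ tg ≫ f' = (f ≫ tf) ≫ w' := by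
      simp only [Category.assoc] at hsq ⊢
      rw [← hsq]
    rw [this]
    exact hL0.2 _ _ htf hw'

/-- Let `C` be a category and `W` a class of morphisms satisfying (L0)
and (L1). Then axiom (L2) holds for `W` if and only if axiom (L2') holds for `W`. -/
theorem axL2_iff_axL2' (W : MorphismProperty C)
    (hL0 : AxL0 W) (hL1 : AxL1 W) :
    AxL2 W ↔ AxL2' W := by
  constructor
  · intro h A B D w f₁ f₂ hw heq
    obtain ⟨E, w', hw', h'⟩ := h w f₁ f₂ hw heq
    exact ⟨E, w', WL.of _ hw', h'⟩
  · intro h A B D w f₁ f₂ hw heq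
    obtain ⟨E, w', hw', h'⟩ := h w f₁ f₂ hw heq
    obtain ⟨Z, t, ht⟩ := hw'.exists_comp_mem W hL0 hL1
    exact ⟨Z, w' ≫ t, ht, by rw [← Category.assoc, ← Category.assoc, h']⟩
end

section
/- Let W ⊆ C admit a calculus of left fractions and let W_L be the class of morphisms generated under composition by W together with all split monomorphisms of C. Then two parallel roofs (f₁, w₁) and (f₂, w₂) are equivalent if and only if there exist morphisms g, h to a common object such that g ∘ f₁ = h ∘ f₂, g ∘ w₁ = h ∘ w₂, and h ∘ w₂ belongs to W_L (rather than to W). -/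
open CategoryTheory

universe v u

variable {C : Type u} [Category.{v} C]

/-- A roof `(f, w)` from `X` to `Y`: morphisms `f : X ⟶ Z` and `w : Y ⟶ Z` with `w ∈ W`. -/
structure Roof (W : MorphismProperty C) (X Y : C) where
  Z : C
  f : X ⟶ Z
  w : Y ⟶ Z
  hw : W w

/-- Two parallel roofs `(f₁, w₁)` and `(f₂, w₂)` from `X` to `Y` are equivalent if there
are morphisms `g`, `h` to a common object with `g ∘ f₁ = h ∘ f₂`, `g ∘ w₁ = h ∘ w₂` and
`g ∘ w₁ ∈ W`. -/
def RoofEquiv (W : MorphismProperty C) {X Y : C} (r₁ r₂ : Roof W X Y) : Prop :=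
  ∃ (E : C) (g : r₁.Z ⟶ E) (h : r₂.Z ⟶ E),
    r₁.f ≫ g = r₂.f ≫ h ∧ r₁.w ≫ g = r₂.w ≫ h ∧ W (r₁.w ≫ g)

lemma WL_comp_mem (W : MorphismProperty C) (hL0 : AxL0 W) (hL1 : AxL1 W)
    {X Y : C} {u : X ⟶ Y} (hu : WL W u) : ∃ (E : C) (t : Y ⟶ E), W (u ≫ t) := by
  induction hu with
  | of f hf => exact ⟨_, 𝟙 _, by simpa using hf⟩
  | splitMono f r hr => exact ⟨_, r, by rw [hr]; exact hL0.1 _⟩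
  | comp f g _ _ ihf ihg =>
    obtain ⟨A, s, hs⟩ := ihf
    obtain ⟨B, t, ht⟩ := ihg
    obtain ⟨E, w', f', hw', heq⟩ := hL1 (g ≫ t) s ht
    refine ⟨E, t ≫ f', ?_⟩
    have e : (f ≫ g) ≫ t ≫ f' = (f ≫ s) ≫ w' := by simp [heq]
    rw [e]
    exact hL0.2 _ _ hs hw'

/-- Let `W ⊆ C` admit a calculus of left fractions and let `W_L` be the
class generated under composition by `W` together with all split monomorphisms. Then two
parallel roofs `(f₁, w₁)` and `(f₂, w₂)` are equivalent if and only if there are morphisms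
`g`, `h` to a common object with `g ∘ f₁ = h ∘ f₂`, `g ∘ w₁ = h ∘ w₂` and `h ∘ w₂ ∈ W_L`
(rather than in `W`). -/
theorem roofEquiv_iff_WL (W : MorphismProperty C)
    (hL0 : AxL0 W) (hL1 : AxL1 W) (hL2 : AxL2 W)
    {X Y : C} (r₁ r₂ : Roof W X Y) :
    RoofEquiv W r₁ r₂ ↔
      ∃ (E : C) (g : r₁.Z ⟶ E) (h : r₂.Z ⟶ E),
        r₁.f ≫ g = r₂.f ≫ h ∧ r₁.w ≫ g = r₂.w ≫ h ∧ WL W (r₂.w ≫ h) := by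
  constructor
  · rintro ⟨E, g, h, h1, h2, h3⟩
    exact ⟨E, g, h, h1, h2, WL.of _ (h2 ▸ h3)⟩
  · rintro ⟨E, g, h, h1, h2, h3⟩
    obtain ⟨F, t, ht⟩ := WL_comp_mem W hL0 hL1 h3
    refine ⟨F, g ≫ t, h ≫ t, ?_, ?_, ?_⟩
    · rw [← Category.assoc, h1, Category.assoc]
    · rw [← Category.assoc, h2, Category.assoc]
    · have e : r₁.w ≫ g ≫ t = (r₂.w ≫ h) ≫ t := by
        rw [← Category.assoc, h2]
      rw [e]; exact ht
end

section
/- Let C be a category and W a class of morphisms satisfying (L0) and (L1), and let W_L be the class of morphisms generated under composition by W together with all split monomorphisms of C. Then the stronger axiom (L1') holds: for every w : A → B in W_L and every morphism f : A → C there exist w' : C → D in W and a morphism f' : B → D such that w' ∘ f = f' ∘ w. -/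
open CategoryTheory

universe v u

variable {C : Type u} [Category.{v} C]

/-- Let `C` be a category and `W` a class of morphisms satisfying (L0)
and (L1). Then the stronger axiom (L1') holds: for every `w : A ⟶ B` in `W_L` and every
morphism `f : A ⟶ D` there are `w' : D ⟶ E` in `W` and `f' : B ⟶ E` with
`w' ∘ f = f' ∘ w`. -/
theorem axL1' (W : MorphismProperty C)
    (hL0 : AxL0 W) (hL1 : AxL1 W)
    {A B D : C} (w : A ⟶ B) (f : A ⟶ D) (hw : WL W w) :
    ∃ (E : C) (w' : D ⟶ E) (f' : B ⟶ E), W w' ∧ f ≫ w' = w ≫ f' := by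
  induction hw generalizing D with
  | of g hg => exact hL1 g f hg
  | splitMono g r hr =>
      exact ⟨D, 𝟙 D, r ≫ f, hL0.1 D, by simp [reassoc_of% hr]⟩
  | comp u v _ _ ihu ihv =>
      obtain ⟨E₁, w₁, f₁, hw₁, h₁⟩ := ihu f
      obtain ⟨E₂, w₂, f₂, hw₂, h₂⟩ := ihv f₁
      exact ⟨E₂, w₁ ≫ w₂, f₂, hL0.2 _ _ hw₁ hw₂, by
        rw [← Category.assoc, h₁, Category.assoc, h₂, Category.assoc]⟩
end

section
/- Suppose C is an additive category and W ⊆ C admits a calculus of left fractions. Then the category of fractions C[W⁻¹] is additive (it is preadditive with roof addition, has a zero object, and has biproducts for all pairs of objects), and the localization functor Loc : C → C[W⁻¹] is additive. -/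
open CategoryTheory Limits

universe w w' v u

variable {C : Type u} [Category.{v} C]

/-- Suppose `C` is an additive category (preadditive, with a zero object
and binary biproducts) and `W ⊆ C` admits a calculus of left fractions. Then the category
of fractions `C[W⁻¹]` — i.e. a localization of `C` at `W` whose objects are those of `C`
and whose morphisms are the equivalence classes of roofs — is additive: it is preadditive
with the roof addition `(f₁, w₁) + (f₂, w₂) = (g ∘ f₁ + w̃ ∘ f₂, w̃ ∘ w₂)` (for a common
denominator `g ∘ w₁ = w̃ ∘ w₂` with `w̃ ∈ W`), it has a zero object and binary biproducts,
and the localization functor is additive. -/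
theorem fractions_additive (W : MorphismProperty C)
    [Preadditive C] [HasZeroObject C] [HasBinaryBiproducts C]
    (hL0 : AxL0 W) (hL1 : AxL1 W) (hL2 : AxL2 W) :
    ∃ (D : Type u) (_ : Category.{max u v} D) (_ : Preadditive D) (L : C ⥤ D),
      -- the objects of the category of fractions are those of `C`
      Function.Bijective L.obj ∧
      -- every morphism of `W` becomes an isomorphism
      (∀ ⦃X Y : C⦄ (f : X ⟶ Y), W f → IsIso (L.map f)) ∧
      -- every morphism of the localization is (the class of) a roof
      (∀ ⦃X Y : C⦄ (φ : L.obj X ⟶ L.obj Y),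
        ∃ r : Roof W X Y, φ ≫ L.map r.w = L.map r.f) ∧
      -- two roofs give the same morphism iff they are equivalent roofs
      (∀ ⦃X Y : C⦄ (r₁ r₂ : Roof W X Y) (φ₁ φ₂ : L.obj X ⟶ L.obj Y),
        φ₁ ≫ L.map r₁.w = L.map r₁.f → φ₂ ≫ L.map r₂.w = L.map r₂.f →
          (φ₁ = φ₂ ↔ RoofEquiv W r₁ r₂)) ∧
      -- the preadditive structure is given by roof addition over a common denominator
      (∀ ⦃X Y : C⦄ (r₁ r₂ : Roof W X Y) {E : C} (g : r₁.Z ⟶ E) (wt : r₂.Z ⟶ E),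
        W wt → r₁.w ≫ g = r₂.w ≫ wt →
          ∀ (φ₁ φ₂ : L.obj X ⟶ L.obj Y),
            φ₁ ≫ L.map r₁.w = L.map r₁.f → φ₂ ≫ L.map r₂.w = L.map r₂.f →
              (φ₁ + φ₂) ≫ L.map (r₂.w ≫ wt) = L.map (r₁.f ≫ g + r₂.f ≫ wt)) ∧
      -- the category of fractions is additive and the localization functor is additive
      HasZeroObject D ∧ HasBinaryBiproducts D ∧ L.Additive ∧
      -- `L` is a localization of `C` at `W`
      (∀ (E : Type w) [Category.{w'} E] (F : C ⥤ E),
        (∀ ⦃X Y : C⦄ (f : X ⟶ Y), W f → IsIso (F.map f)) →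
          ∃! G : D ⥤ E, L ⋙ G = F) := by
  haveI : W.IsMultiplicative :=
    { id_mem := hL0.1, comp_mem := fun f g hf hg => hL0.2 f g hf hg }
  haveI : W.HasLeftCalculusOfFractions :=
    { exists_leftFraction := fun X Y φ => by
        obtain ⟨E, w', f', hw', h⟩ := hL1 φ.s φ.f φ.hs
        exact ⟨MorphismProperty.LeftFraction.mk f' w' hw', h⟩
      ext := fun X' X Y f₁ f₂ s hs h => by
        obtain ⟨E, w', hw', h'⟩ := hL2 s f₁ f₂ hs h
        exact ⟨E, w', hw', h'⟩ }
  refine ⟨W.Localization, inferInstance, inferInstance, W.Q,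
    ?_, ?_, ?_, ?_, ?_, inferInstance, ?_, inferInstance, ?_⟩
  · exact (CategoryTheory.Localization.Construction.objEquiv W).bijective
  · exact fun X Y f hf => Localization.inverts W.Q W f hf
  · intro X Y φ
    obtain ⟨ψ, rfl⟩ := Localization.exists_leftFraction W.Q W φ
    exact ⟨⟨ψ.Y', ψ.f, ψ.s, ψ.hs⟩, ψ.map_comp_map_s W.Q (Localization.inverts W.Q W)⟩
  · intro X Y r₁ r₂ φ₁ φ₂ h₁ h₂
    haveI := Localization.inverts W.Q W r₁.w r₁.hw
    haveI := Localization.inverts W.Q W r₂.w r₂.hw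
    have e₁ : φ₁ = (MorphismProperty.LeftFraction.mk r₁.f r₁.w r₁.hw).map W.Q
        (Localization.inverts W.Q W) := by
      rw [← cancel_mono (W.Q.map r₁.w), h₁,
        (MorphismProperty.LeftFraction.mk r₁.f r₁.w r₁.hw).map_comp_map_s]
    have e₂ : φ₂ = (MorphismProperty.LeftFraction.mk r₂.f r₂.w r₂.hw).map W.Q
        (Localization.inverts W.Q W) := by
      rw [← cancel_mono (W.Q.map r₂.w), h₂,
        (MorphismProperty.LeftFraction.mk r₂.f r₂.w r₂.hw).map_comp_map_s]
    rw [e₁, e₂, MorphismProperty.LeftFraction.map_eq_iff W.Q W]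
    constructor
    · rintro ⟨Z, t₁, t₂, hst, hft, ht⟩
      exact ⟨Z, t₁, t₂, hft, hst, ht⟩
    · rintro ⟨Z, t₁, t₂, hft, hst, ht⟩
      exact ⟨Z, t₁, t₂, hst, hft, ht⟩
  · intro X Y r₁ r₂ E g wt hwt hcomm φ₁ φ₂ h₁ h₂
    calc (φ₁ + φ₂) ≫ W.Q.map (r₂.w ≫ wt)
        = φ₁ ≫ W.Q.map (r₁.w ≫ g) + φ₂ ≫ W.Q.map (r₂.w ≫ wt) := by
          rw [Preadditive.add_comp, hcomm]
      _ = W.Q.map (r₁.f ≫ g) + W.Q.map (r₂.f ≫ wt) := by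
          rw [W.Q.map_comp, W.Q.map_comp, ← Category.assoc, ← Category.assoc, h₁, h₂,
            ← W.Q.map_comp, ← W.Q.map_comp]
      _ = W.Q.map (r₁.f ≫ g + r₂.f ≫ wt) := (W.Q.map_add).symm
  · constructor
    intro X Y
    obtain ⟨A, rfl⟩ := (CategoryTheory.Localization.Construction.objEquiv W).surjective X
    obtain ⟨B, rfl⟩ := (CategoryTheory.Localization.Construction.objEquiv W).surjective Y
    haveI : PreservesBinaryBiproducts W.Q :=
      preservesBinaryBiproducts_of_preservesBiproducts W.Q
    exact CategoryTheory.Functor.hasBinaryBiproduct_of_preserves W.Q A B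
  · intro E _ F hF
    exact ⟨CategoryTheory.Localization.Construction.lift F hF,
      CategoryTheory.Localization.Construction.fac F hF,
      fun G hG => CategoryTheory.Localization.Construction.uniq G _
        (hG.trans (CategoryTheory.Localization.Construction.fac F hF).symm)⟩
end
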